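/- arXiv:1708.08096 — 2 statements merged into one kernel-verified Lean document; each statement's English description precedes it below -/
import Mathlib

section
/- For every integer n ≥ 0, the Euler polynomial E_n(x) equals x^n plus a sum over odd k with 1 ≤ k ≤ n of e_k(n) x^{n-k}; equivalently, the coefficient of x^{n-k} in E_n(x) is zero for every even k with 2 ≤ k ≤ n, and the leading coefficient is 1. -/
/-!
Comparing coefficients in the defining recursion shows that `E_n` is an Appell sequence,
`E_n(x) = ∑_j (n choose j) E_{n-j}(0) x^j`, so the claim is that `E_k(0) = 0` for even `k ≥ 2`.
The recursion for the constants says that `f(t) = ∑ E_k(0) t^k/k!` satisfies `f(t)(e^t + 1) = 2`.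
Then `f(-t)(e^t + 1) = 2e^t`, hence `f(t) + f(-t) = 2`, and the even coefficients of `f` past the
constant term vanish.
-/

open Polynomial Finset

/-- Euler polynomials `E n`, defined by the recursion
`E n = X^n - (1/2) * ∑_{k<n} (n choose k) • E k`, equivalent to the
generating function `2 e^{xt}/(e^t + 1) = ∑ E_n(x) t^n/n!`. -/
noncomputable def eulerPoly : ℕ → Polynomial ℚ :=
  WellFounded.fix Nat.lt_wfRel.wf fun n E =>
    Polynomial.X ^ n - (2⁻¹ : ℚ) • ∑ k : Fin n, ((n.choose k : ℚ)) • E k k.2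

theorem isUnit_two_of_ratAlgebra {A : Type*} [Ring A] [Algebra ℚ A] : IsUnit (2 : A) := by
  simpa only [map_ofNat] using (IsUnit.mk0 (2 : ℚ) two_ne_zero).map (algebraMap ℚ A)

namespace PowerSeries

variable {A : Type*} [CommRing A] [Algebra ℚ A]

theorem add_evalNegHom_of_mul_exp_add_one_eq_two {f : A⟦X⟧} (hf : f * (exp A + 1) = 2) :
    f + evalNegHom f = 2 := by
  have hunit : IsUnit (exp A + 1) := by
    rw [isUnit_iff_constantCoeff, map_add, constantCoeff_exp, map_one, one_add_one_eq_two]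
    exact isUnit_two_of_ratAlgebra
  have hneg : evalNegHom f * (exp A + 1) = 2 * exp A := by
    have := congrArg (· * exp A) (congrArg evalNegHom hf)
    simp only [map_mul, map_add, map_one, map_ofNat] at this
    rw [← this, mul_assoc, add_mul, mul_comm (evalNegHom (exp A)), exp_mul_exp_neg_eq_one,
      one_mul, add_comm]
  rw [← hunit.mul_left_inj, add_mul, hf, hneg]
  ring

theorem coeff_eq_zero_of_mul_exp_add_one_eq_two {f : A⟦X⟧} (hf : f * (exp A + 1) = 2) {n : ℕ}
    (hn : n ≠ 0) (he : Even n) : coeff n f = 0 := by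
  have h := congrArg (coeff n) (add_evalNegHom_of_mul_exp_add_one_eq_two hf)
  rw [map_add, evalNegHom, coeff_rescale, he.neg_one_pow, one_mul, ← two_mul,
    ← map_ofNat (C (R := A)), coeff_C, if_neg hn] at h
  exact isUnit_two_of_ratAlgebra.mul_right_eq_zero.1 h

theorem coeff_mk_div_factorial_mul_exp (a : ℕ → ℚ) (n : ℕ) :
    coeff n (mk (fun m => a m / m.factorial) * exp ℚ) =
      (∑ m ∈ range (n + 1), n.choose m * a m) / n.factorial := by
  rw [coeff_mul, Nat.sum_antidiagonal_eq_sum_range_succ_mk, sum_div]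
  refine sum_congr rfl fun m hm => ?_
  rw [coeff_mk, coeff_exp, Nat.cast_choose ℚ (mem_range_succ_iff.1 hm)]
  simp only [Algebra.algebraMap_self, RingHom.id_apply]
  field_simp

end PowerSeries

theorem eulerPoly_eq (n : ℕ) : eulerPoly n =
    X ^ n - (2⁻¹ : ℚ) • ∑ k ∈ range n, (n.choose k : ℚ) • eulerPoly k := by
  rw [← Fin.sum_univ_eq_sum_range (fun k => (n.choose k : ℚ) • eulerPoly k)]
  exact WellFounded.fix_eq _ _ _

theorem coeff_eulerPoly_eq (n j : ℕ) : (eulerPoly n).coeff j =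
    (if j = n then 1 else 0) - 2⁻¹ * ∑ m ∈ range n, n.choose m * (eulerPoly m).coeff j := by
  simp only [eulerPoly_eq n, coeff_sub, coeff_X_pow, coeff_smul, finsetSum_coeff, smul_eq_mul]

theorem coeff_eulerPoly_of_lt {n j : ℕ} (h : n < j) : (eulerPoly n).coeff j = 0 := by
  induction n using Nat.strong_induction_on with
  | _ n ih =>
    rw [coeff_eulerPoly_eq, if_neg h.ne', sum_eq_zero fun m hm => by
      rw [ih m (mem_range.1 hm) ((mem_range.1 hm).trans h), mul_zero]]
    simp

theorem coeff_eulerPoly {n j : ℕ} (h : j ≤ n) :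
    (eulerPoly n).coeff j = n.choose j * (eulerPoly (n - j)).coeff 0 := by
  induction n using Nat.strong_induction_on with
  | _ n ih =>
    obtain ⟨d, rfl⟩ := Nat.exists_eq_add_of_le h
    have hsum : ∑ m ∈ range (j + d), ((j + d).choose m : ℚ) * (eulerPoly m).coeff j =
        (j + d).choose j * ∑ r ∈ range d, (d.choose r : ℚ) * (eulerPoly r).coeff 0 := by
      rw [sum_range_add, sum_eq_zero fun m hm => by
        rw [coeff_eulerPoly_of_lt (mem_range.1 hm), mul_zero], zero_add, mul_sum]
      refine sum_congr rfl fun r hr => ?_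
      rw [ih (j + r) (by simpa using hr) (Nat.le_add_right j r), Nat.add_sub_cancel_left,
        ← mul_assoc, ← Nat.cast_mul, Nat.choose_mul (Nat.le_add_right j r) ..]
      simp only [Nat.add_sub_cancel_left, Nat.cast_mul, mul_assoc]
    rw [coeff_eulerPoly_eq, hsum, Nat.add_sub_cancel_left, coeff_eulerPoly_eq d 0]
    rcases Nat.eq_zero_or_pos d with rfl | hd
    · simp
    · rw [if_neg (by omega), if_neg (by omega)]
      ring

theorem egf_coeff_zero_eulerPoly_mul_exp_add_one :
    PowerSeries.mk (fun n => (eulerPoly n).coeff 0 / n.factorial) * (PowerSeries.exp ℚ + 1) =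
      2 := by
  ext n
  rw [mul_add, mul_one, map_add, PowerSeries.coeff_mk_div_factorial_mul_exp, PowerSeries.coeff_mk,
    sum_range_succ, Nat.choose_self, Nat.cast_one, one_mul, ← map_ofNat PowerSeries.C,
    PowerSeries.coeff_C, coeff_eulerPoly_eq n 0]
  rcases Nat.eq_zero_or_pos n with rfl | hn
  · norm_num
  · simp only [if_neg hn.ne, if_neg hn.ne']
    ring

theorem coeff_zero_eulerPoly_of_even {n : ℕ} (hn : n ≠ 0) (he : Even n) :
    (eulerPoly n).coeff 0 = 0 := by
  simpa [Nat.factorial_ne_zero] using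
    PowerSeries.coeff_eq_zero_of_mul_exp_add_one_eq_two egf_coeff_zero_eulerPoly_mul_exp_add_one hn he

theorem stmt_4 (n : ℕ) :
    (eulerPoly n).coeff n = 1 ∧
    ∀ k : ℕ, 2 ≤ k → k ≤ n → Even k → (eulerPoly n).coeff (n - k) = 0 := by
  refine ⟨?_, fun k hk hkn he => ?_⟩
  · rw [coeff_eulerPoly le_rfl, Nat.choose_self, Nat.sub_self, coeff_eulerPoly_eq 0 0]
    simp
  · rw [coeff_eulerPoly (Nat.sub_le n k), Nat.sub_sub_self hkn,
      coeff_zero_eulerPoly_of_even (by omega) he, mul_zero]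
end

section
/- For every odd integer k ≥ 1, the rational number (2^{k+1}-1) · N(2B_{k+1}) is an odd integer, where N(2B_{k+1}) denotes the numerator of 2B_{k+1} in lowest terms. -/
/-!
Faulhaber's formula for `0 ^ m + 1 ^ m` gives
`(m + 1) (2 B_m - 1) = -∑_{i < m} C(m + 1, i) (2 B_i) 2 ^ (m - i)`.
By strong induction every `2 B_i` is a `2`-adic integer (odd-index Bernoulli numbers vanish beyond
`B_1`), so for even `m ≥ 2` the right-hand side has `2`-adic norm `< 1` while `m + 1` is a
`2`-adic unit: `2 B_m ≡ 1` modulo `2`. Hence `2 B_m` is a `2`-adic unit and its numerator is odd.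
-/

open Finset

theorem padicNorm.eq_one_of_sub_one_lt_one {p : ℕ} [Fact p.Prime] {q : ℚ}
    (hq : padicNorm p (q - 1) < 1) : padicNorm p q = 1 := by
  have hne : padicNorm p (q - 1) ≠ padicNorm p 1 := by rw [padicNorm.one]; exact hq.ne
  rw [← sub_add_cancel q 1, padicNorm.add_eq_max_of_ne hne, padicNorm.one, max_eq_right hq.le]

theorem padicNorm.not_dvd_num_of_eq_one {p : ℕ} [Fact p.Prime] {q : ℚ}
    (hq : padicNorm p q = 1) : ¬ (p : ℤ) ∣ q.num := by
  intro hdvd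
  have hden : ¬ p ∣ q.den := fun h ↦
    Nat.Prime.not_dvd_one Fact.out (q.reduced ▸ Nat.dvd_gcd (Int.natCast_dvd.mp hdvd) h)
  have hq' : padicNorm p q = padicNorm p q.num := by
    conv_lhs => rw [← Rat.num_div_den q]
    rw [padicNorm.div, (padicNorm.nat_eq_one_iff _).mpr hden, div_one]
  exact ((padicNorm.int_lt_one_iff _).mpr hdvd).ne (hq' ▸ hq)

theorem bernoulli_two_mul_sub_one_mul (m : ℕ) (hm : m ≠ 0) :
    ((m : ℚ) + 1) * (2 * bernoulli m - 1) =
      -∑ i ∈ range m, ((m + 1).choose i : ℚ) * (2 * bernoulli i) * 2 ^ (m - i) := by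
  have h := sum_range_pow 2 m
  simp only [sum_range_succ _ 1, sum_range_one, sum_range_succ _ m, Nat.choose_succ_self_right,
    Nat.add_sub_cancel_left, ← sum_div, ← add_div, Nat.cast_zero, Nat.cast_one, zero_pow hm,
    one_pow, zero_add, Nat.cast_ofNat] at h
  rw [eq_div_iff (by positivity)] at h
  have hsum : ∑ i ∈ range m, bernoulli i * ((m + 1).choose i : ℚ) * 2 ^ (m + 1 - i) =
      ∑ i ∈ range m, ((m + 1).choose i : ℚ) * (2 * bernoulli i) * 2 ^ (m - i) := by
    refine sum_congr rfl fun i hi ↦ ?_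
    rw [Nat.sub_add_comm (mem_range.mp hi).le, pow_succ]
    ring
  rw [hsum] at h
  push_cast at h
  linear_combination -h

theorem padicNorm_two_mul_bernoulli_sub_one_lt_one_of_forall_lt {m : ℕ} (hm : Even m)
    (hm0 : m ≠ 0) (h : ∀ i < m, padicNorm 2 (2 * bernoulli i) ≤ 1) :
    padicNorm 2 (2 * bernoulli m - 1) < 1 := by
  have hunit : padicNorm 2 ((m : ℚ) + 1) = 1 := by
    exact_mod_cast (padicNorm.nat_eq_one_iff (m + 1)).mpr
      (by simpa [← even_iff_two_dvd] using hm.add_one)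
  have key := congrArg (padicNorm 2) (bernoulli_two_mul_sub_one_mul m hm0)
  rw [padicNorm.mul, hunit, one_mul, padicNorm.neg] at key
  rw [key]
  refine padicNorm.sum_lt (nonempty_range_iff.mpr hm0) fun i hi ↦ ?_
  have hi := mem_range.mp hi
  have hpow : padicNorm 2 ((2 : ℚ) ^ (m - i)) < 1 := by
    exact_mod_cast (padicNorm.nat_lt_one_iff (2 ^ (m - i))).mpr (dvd_pow_self 2 (by omega))
  rw [padicNorm.mul, padicNorm.mul]
  exact (mul_le_of_le_one_left (padicNorm.nonneg _)
    (mul_le_one₀ (padicNorm.of_nat _) (padicNorm.nonneg _) (h i hi))).trans_lt hpow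

theorem padicNorm_two_mul_bernoulli_le_one (m : ℕ) : padicNorm 2 (2 * bernoulli m) ≤ 1 := by
  induction m using Nat.strong_induction_on with
  | _ m ih =>
    rcases Nat.even_or_odd m with hm | hm
    · obtain rfl | hm0 := eq_or_ne m 0
      · simpa using (padicNorm.padicNorm_p_lt_one_of_prime (p := 2)).le
      · have hlt := padicNorm_two_mul_bernoulli_sub_one_lt_one_of_forall_lt hm hm0 ih
        rw [padicNorm.eq_one_of_sub_one_lt_one hlt]
    · obtain rfl | hm1 := eq_or_ne m 1
      · norm_num
      · rw [bernoulli_eq_zero_of_odd hm (by grind), mul_zero, padicNorm.zero]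
        exact zero_le_one

theorem padicNorm_two_mul_bernoulli_sub_one_lt_one {m : ℕ} (hm : Even m) (hm0 : m ≠ 0) :
    padicNorm 2 (2 * bernoulli m - 1) < 1 :=
  padicNorm_two_mul_bernoulli_sub_one_lt_one_of_forall_lt hm hm0
    fun i _ ↦ padicNorm_two_mul_bernoulli_le_one i

theorem odd_num_two_mul_bernoulli {m : ℕ} (hm : Even m) (hm0 : m ≠ 0) :
    Odd (2 * bernoulli m).num := by
  have hnum := padicNorm.not_dvd_num_of_eq_one
    (padicNorm.eq_one_of_sub_one_lt_one (padicNorm_two_mul_bernoulli_sub_one_lt_one hm hm0))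
  rwa [← Int.not_even_iff_odd, even_iff_two_dvd]

theorem stmt_11_general (k : ℕ) (hk : Odd k) :
    Odd ((2 ^ (k + 1) - 1 : ℤ) * (2 * bernoulli (k + 1)).num) := by
  have hpow : Even (2 ^ (k + 1) : ℤ) := even_two.pow_of_ne_zero k.succ_ne_zero
  exact (hpow.sub_odd odd_one).mul (odd_num_two_mul_bernoulli hk.add_one k.succ_ne_zero)

theorem stmt_11 (k : ℕ) (hk : Odd k) (hk1 : 1 ≤ k) :
    Odd ((2 ^ (k + 1) - 1 : ℤ) * (2 * bernoulli (k + 1)).num) :=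
  stmt_11_general k hk
end
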